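/- Let α ∈ (0,1) and T > 0. Suppose g : [0,∞) × [0,∞) → ℝ is continuous, and for d > 0 define ω_d(ε) = sup{|g(t₂,s) − g(t₁,s)| : s, t₁, t₂ ∈ [0,T], t₁ ≥ s, t₂ ≥ s, |t₂ − t₁| ≤ ε}. Then for all t₁ ≤ t₂ in [0,T] with t₂ − t₁ ≤ ε, |(1/Γ(α)) ∫₀^{t₂} g(t₂,s)(t₂−s)^{α−1} ds − (1/Γ(α)) ∫₀^{t₁} g(t₁,s)(t₁−s)^{α−1} ds| ≤ (1/Γ(α+1))·[2ε^α·M + T^α·ω_d(ε)], where M = sup{|g(t,s)| : 0 ≤ s ≤ t ≤ T}. -/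

import Mathlib

/-!
Split the difference of the two fractional integrals at `t₁` into three pieces: the change of
`g` against the kernel `(t₁-s)^{α-1}` (at most `ω t₁^α / α`), the change of the kernel against
`g(t₂,·)` on `[0,t₁]`, and the tail over `[t₁,t₂]` (at most `M (t₂-t₁)^α / α`). Since `α ≤ 1`
the kernel `(t-s)^{α-1}` decreases in `t`, so the middle piece has a sign-definite kernel and
is at most `M (t₁^α - t₂^α + (t₂-t₁)^α) / α ≤ M (t₂-t₁)^α / α`. Finally `Γ(α+1) = α Γ(α)`.
-/

open Real intervalIntegral MeasureTheory Set

section SubRpowKernel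

variable {α : ℝ}

lemma intervalIntegrable_sub_rpow (hα : 0 < α) (t a b : ℝ) :
    IntervalIntegrable (fun s => (t - s) ^ (α - 1)) volume a b := by
  simpa using (intervalIntegrable_rpow' (a := t - a) (b := t - b)
    (by linarith : (-1 : ℝ) < α - 1)).comp_sub_left t

lemma integral_sub_rpow (hα : 0 < α) (t a b : ℝ) :
    ∫ s in a..b, (t - s) ^ (α - 1) = ((t - a) ^ α - (t - b) ^ α) / α := by
  rw [integral_comp_sub_left (fun u => u ^ (α - 1)) t,
    integral_rpow (Or.inl (by linarith)), sub_add_cancel]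

lemma ContinuousOn.intervalIntegrable_mul_sub_rpow {f : ℝ → ℝ} {t a b : ℝ}
    (hf : ContinuousOn f (uIcc a b)) (hα : 0 < α) :
    IntervalIntegrable (fun s => f s * (t - s) ^ (α - 1)) volume a b :=
  (intervalIntegrable_sub_rpow hα t a b).continuousOn_mul hf

end SubRpowKernel

lemma abs_integral_mul_le_of_abs_le {f w : ℝ → ℝ} {a b C : ℝ} (hab : a ≤ b)
    (hw : IntervalIntegrable w volume a b) (hf : ∀ s ∈ Ioo a b, |f s| ≤ C)
    (hw0 : ∀ s ∈ Ioo a b, 0 ≤ w s) :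
    |∫ s in a..b, f s * w s| ≤ C * ∫ s in a..b, w s := by
  rw [← intervalIntegral.integral_const_mul, ← Real.norm_eq_abs]
  refine norm_integral_le_of_norm_le hab ?_ (hw.const_mul C)
  filter_upwards [volume.ae_ne b] with s hsb hs
  have hs' : s ∈ Ioo a b := ⟨hs.1, lt_of_le_of_ne hs.2 hsb⟩
  rw [Real.norm_eq_abs, abs_mul, abs_of_nonneg (hw0 s hs')]
  exact mul_le_mul_of_nonneg_right (hf s hs') (hw0 s hs')

lemma abs_integral_mul_sub_rpow_le {α a b t C : ℝ} {f : ℝ → ℝ} (hα : 0 < α) (hab : a ≤ b)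
    (hbt : b ≤ t) (hf : ∀ s ∈ Ioo a b, |f s| ≤ C) :
    |∫ s in a..b, f s * (t - s) ^ (α - 1)| ≤ C * (((t - a) ^ α - (t - b) ^ α) / α) := by
  rw [← integral_sub_rpow hα]
  exact abs_integral_mul_le_of_abs_le hab (intervalIntegrable_sub_rpow hα t a b) hf
    fun s hs => rpow_nonneg (by linarith [hs.2]) _

lemma abs_integral_mul_sub_rpow_sub_sub_rpow_le {α t₁ t₂ M : ℝ} {f : ℝ → ℝ} (hα : 0 < α)
    (hα1 : α ≤ 1) (ht₁ : 0 ≤ t₁) (h12 : t₁ ≤ t₂) (hf : ∀ s ∈ Ioo 0 t₁, |f s| ≤ M) :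
    |∫ s in 0..t₁, f s * ((t₁ - s) ^ (α - 1) - (t₂ - s) ^ (α - 1))| ≤
      M * ((t₁ ^ α - t₂ ^ α + (t₂ - t₁) ^ α) / α) := by
  have h₁ := intervalIntegrable_sub_rpow hα t₁ 0 t₁
  have h₂ := intervalIntegrable_sub_rpow hα t₂ 0 t₁
  have hint : ∫ s in 0..t₁, ((t₁ - s) ^ (α - 1) - (t₂ - s) ^ (α - 1)) =
      (t₁ ^ α - t₂ ^ α + (t₂ - t₁) ^ α) / α := by
    rw [integral_sub h₁ h₂, integral_sub_rpow hα, integral_sub_rpow hα,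
      sub_zero, sub_zero, sub_self, zero_rpow hα.ne']
    ring
  rw [← hint]
  refine abs_integral_mul_le_of_abs_le ht₁ (h₁.sub h₂) hf fun s hs => sub_nonneg.2 ?_
  exact rpow_le_rpow_of_nonpos (by linarith [hs.2]) (by linarith) (by linarith)

lemma integral_mul_sub_integral_mul_eq {F₁ F₂ K₁ K₂ : ℝ → ℝ} {t₁ t₂ : ℝ}
    (h₂₂ : IntervalIntegrable (fun s => F₂ s * K₂ s) volume 0 t₁)
    (h₂₂' : IntervalIntegrable (fun s => F₂ s * K₂ s) volume t₁ t₂)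
    (h₂₁ : IntervalIntegrable (fun s => F₂ s * K₁ s) volume 0 t₁)
    (h₁₁ : IntervalIntegrable (fun s => F₁ s * K₁ s) volume 0 t₁) :
    (∫ s in 0..t₂, F₂ s * K₂ s) - ∫ s in 0..t₁, F₁ s * K₁ s =
      (∫ s in 0..t₁, (F₂ s - F₁ s) * K₁ s) - (∫ s in 0..t₁, F₂ s * (K₁ s - K₂ s)) +
        ∫ s in t₁..t₂, F₂ s * K₂ s := by
  rw [← integral_add_adjacent_intervals h₂₂ h₂₂']
  simp only [sub_mul, mul_sub]
  rw [integral_sub h₂₁ h₁₁, integral_sub h₂₁ h₂₂]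
  ring

theorem abs_integral_mul_sub_rpow_sub_le {α ε T M ω t₁ t₂ : ℝ} {g : ℝ → ℝ → ℝ}
    (hα : 0 < α) (hα1 : α ≤ 1) (ht₁ : 0 ≤ t₁) (h12 : t₁ ≤ t₂) (ht₁T : t₁ ≤ T)
    (hd : t₂ - t₁ ≤ ε) (hg₁ : ContinuousOn (g t₁) (Icc 0 t₁))
    (hg₂ : ContinuousOn (g t₂) (Icc 0 t₂)) (hM0 : 0 ≤ M) (hω0 : 0 ≤ ω)
    (hM : ∀ s ∈ Ioo 0 t₂, |g t₂ s| ≤ M) (hω : ∀ s ∈ Ioo 0 t₁, |g t₂ s - g t₁ s| ≤ ω) :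
    |(∫ s in 0..t₂, g t₂ s * (t₂ - s) ^ (α - 1)) - ∫ s in 0..t₁, g t₁ s * (t₁ - s) ^ (α - 1)| ≤
      (2 * ε ^ α * M + T ^ α * ω) / α := by
  have hg₂₁ : ContinuousOn (g t₂) (uIcc 0 t₁) :=
    hg₂.mono (by rw [uIcc_of_le ht₁]; exact Icc_subset_Icc_right h12)
  have hg₂₂ : ContinuousOn (g t₂) (uIcc t₁ t₂) :=
    hg₂.mono (by rw [uIcc_of_le h12]; exact Icc_subset_Icc_left ht₁)
  rw [integral_mul_sub_integral_mul_eq (hg₂₁.intervalIntegrable_mul_sub_rpow hα)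
    (hg₂₂.intervalIntegrable_mul_sub_rpow hα) (hg₂₁.intervalIntegrable_mul_sub_rpow hα)
    ((uIcc_of_le ht₁ ▸ hg₁).intervalIntegrable_mul_sub_rpow hα)]
  have hA := abs_integral_mul_sub_rpow_le (t := t₁) hα ht₁ le_rfl hω
  have hB := abs_integral_mul_sub_rpow_sub_sub_rpow_le hα hα1 ht₁ h12
    fun s hs => hM s ⟨hs.1, hs.2.trans_le h12⟩
  have hC := abs_integral_mul_sub_rpow_le (t := t₂) hα h12 le_rfl
    fun s hs => hM s ⟨ht₁.trans_lt hs.1, hs.2⟩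
  simp only [sub_zero, sub_self, zero_rpow hα.ne'] at hA hC
  have h₁₂ : t₁ ^ α ≤ t₂ ^ α := rpow_le_rpow ht₁ h12 hα.le
  have h₁T : t₁ ^ α ≤ T ^ α := rpow_le_rpow ht₁ ht₁T hα.le
  have hdε : (t₂ - t₁) ^ α ≤ ε ^ α := rpow_le_rpow (by linarith) hd hα.le
  calc _ ≤ ω * (t₁ ^ α / α) + M * ((t₁ ^ α - t₂ ^ α + (t₂ - t₁) ^ α) / α)
        + M * ((t₂ - t₁) ^ α / α) := (abs_add_le _ _).trans (add_le_add
          ((abs_sub _ _).trans (add_le_add hA hB)) hC)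
    _ = (ω * t₁ ^ α + M * (t₁ ^ α - t₂ ^ α) + 2 * M * (t₂ - t₁) ^ α) / α := by ring
    _ ≤ (2 * ε ^ α * M + T ^ α * ω) / α := by
      gcongr ?_ / α
      nlinarith [mul_le_mul_of_nonneg_left h₁T hω0, mul_le_mul_of_nonneg_left hdε hM0,
        mul_le_mul_of_nonneg_left h₁₂ hM0]

theorem stmt19_general (α T ε : ℝ) (hα : 0 < α) (hα1 : α < 1)
    (g : ℝ → ℝ → ℝ)
    (hg : ContinuousOn (fun p : ℝ × ℝ => g p.1 p.2) (Set.Ici 0 ×ˢ Set.Ici 0))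
    (M ωd : ℝ)
    (hM : ∀ t s : ℝ, 0 ≤ s → s ≤ t → t ≤ T → |g t s| ≤ M)
    (hω : ∀ s t₁ t₂ : ℝ, s ∈ Set.Icc 0 T → t₁ ∈ Set.Icc 0 T → t₂ ∈ Set.Icc 0 T →
      s ≤ t₁ → s ≤ t₂ → |t₂ - t₁| ≤ ε → |g t₂ s - g t₁ s| ≤ ωd)
    (t₁ t₂ : ℝ) (ht₁ : t₁ ∈ Set.Icc 0 T) (ht₂ : t₂ ∈ Set.Icc 0 T)
    (h12 : t₁ ≤ t₂) (hd : t₂ - t₁ ≤ ε) :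
    |(1 / Real.Gamma α) * (∫ s in (0:ℝ)..t₂, g t₂ s * (t₂ - s) ^ (α - 1)) -
     (1 / Real.Gamma α) * (∫ s in (0:ℝ)..t₁, g t₁ s * (t₁ - s) ^ (α - 1))| ≤
      (1 / Real.Gamma (α + 1)) * (2 * ε ^ α * M + T ^ α * ωd) := by
  obtain ⟨ht₁0, ht₁T⟩ := ht₁
  obtain ⟨ht₂0, ht₂T⟩ := ht₂
  have hgt : ∀ t, 0 ≤ t → ContinuousOn (g t) (Icc 0 t) := fun t ht =>
    hg.comp (by fun_prop) fun s hs => mk_mem_prod ht hs.1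
  have hωt : |t₂ - t₁| ≤ ε := by rwa [abs_of_nonneg (sub_nonneg.2 h12)]
  have hω0 : 0 ≤ ωd := (abs_nonneg _).trans
    (hω 0 t₁ t₂ ⟨le_rfl, ht₁0.trans ht₁T⟩ ⟨ht₁0, ht₁T⟩ ⟨ht₂0, ht₂T⟩ ht₁0 ht₂0 hωt)
  have key := abs_integral_mul_sub_rpow_sub_le hα hα1.le ht₁0 h12 ht₁T hd (hgt t₁ ht₁0)
    (hgt t₂ ht₂0) ((abs_nonneg _).trans (hM t₂ t₂ ht₂0 le_rfl ht₂T)) hω0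
    (fun s hs => hM t₂ s hs.1.le hs.2.le ht₂T)
    fun s hs => hω s t₁ t₂ ⟨hs.1.le, hs.2.le.trans ht₁T⟩ ⟨ht₁0, ht₁T⟩ ⟨ht₂0, ht₂T⟩ hs.2.le
      (hs.2.le.trans h12) hωt
  rw [← mul_sub, abs_mul, abs_of_pos (one_div_pos.2 (Gamma_pos_of_pos hα)),
    Gamma_add_one hα.ne', div_mul_eq_mul_div, one_mul, div_mul_eq_mul_div, one_mul,
    mul_comm α, ← div_div, div_right_comm]
  exact div_le_div_of_nonneg_right key (Gamma_pos_of_pos hα).le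

/-- Key modulus-of-continuity estimate (eq. (3.3) of the paper): if `g` is continuous
on the triangle `{(t,s) : 0 ≤ s ≤ t ≤ T}`, bounded by `M` there, with modulus
`ω_d(ε)` in the first variable, then for `t₁ ≤ t₂` in `[0,T]` with `t₂ - t₁ ≤ ε`,
the fractional integrals differ by at most `(2ε^α M + T^α ω_d(ε))/Γ(α+1)`. -/
theorem stmt19 (α T ε : ℝ) (hα : 0 < α) (hα1 : α < 1) (hT : 0 < T) (hε : 0 < ε)
    (g : ℝ → ℝ → ℝ)
    (hg : ContinuousOn (fun p : ℝ × ℝ => g p.1 p.2) (Set.Ici 0 ×ˢ Set.Ici 0))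
    (M ωd : ℝ)
    (hM : ∀ t s : ℝ, 0 ≤ s → s ≤ t → t ≤ T → |g t s| ≤ M)
    (hω : ∀ s t₁ t₂ : ℝ, s ∈ Set.Icc 0 T → t₁ ∈ Set.Icc 0 T → t₂ ∈ Set.Icc 0 T →
      s ≤ t₁ → s ≤ t₂ → |t₂ - t₁| ≤ ε → |g t₂ s - g t₁ s| ≤ ωd)
    (t₁ t₂ : ℝ) (ht₁ : t₁ ∈ Set.Icc 0 T) (ht₂ : t₂ ∈ Set.Icc 0 T)
    (h12 : t₁ ≤ t₂) (hd : t₂ - t₁ ≤ ε) :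
    |(1 / Real.Gamma α) * (∫ s in (0:ℝ)..t₂, g t₂ s * (t₂ - s) ^ (α - 1)) -
     (1 / Real.Gamma α) * (∫ s in (0:ℝ)..t₁, g t₁ s * (t₁ - s) ^ (α - 1))| ≤
      (1 / Real.Gamma (α + 1)) * (2 * ε ^ α * M + T ^ α * ωd) :=
  stmt19_general α T ε hα hα1 g hg M ωd hM hω t₁ t₂ ht₁ ht₂ h12 hd
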